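/- For α > 0 and η ∈ (1/2, 1), define f(α, η) = η·Φ(α/2 + (1/α)ln(η/(1-η))) + (1-η)·Φ(α/2 - (1/α)ln(η/(1-η))), where Φ is the standard Gaussian CDF. Then f is strictly increasing in α: if α₁ > α₂ > 0, then f(α₁, η) > f(α₂, η). -/

import Mathlib

/-! The classes' weighted densities agree at the Bayes threshold:
`η φ(α/2 + c/α) = (1 - η) φ(α/2 - c/α)` with `c = log (η / (1 - η))`. Hence, differentiating
in `α`, the terms coming from the moving threshold `± c/α` cancel, and `∂f/∂α = η φ(α/2 + c/α) > 0`. -/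

open MeasureTheory ProbabilityTheory Real Set

theorem hasDerivAt_integral_Iic {g : ℝ → ℝ} (hg : Integrable g) {x : ℝ} (hx : ContinuousAt g x) :
    HasDerivAt (fun y ↦ ∫ t in Iic y, g t) (g x) x := by
  have hsplit : ∀ y, ∫ t in Iic y, g t = (∫ t in Iic 0, g t) + ∫ t in (0 : ℝ)..y, g t := by
    intro y
    rw [← intervalIntegral.integral_Iic_sub_Iic hg.integrableOn hg.integrableOn]
    ring
  rw [funext hsplit]
  exact (intervalIntegral.integral_hasDerivAt_right hg.intervalIntegrable
    hg.aestronglyMeasurable.stronglyMeasurableAtFilter hx).const_add _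

theorem continuous_gaussianPDFReal (μ : ℝ) (v : NNReal) : Continuous (gaussianPDFReal μ v) := by
  rw [gaussianPDFReal_def]
  fun_prop

theorem cdf_gaussianReal_eq_integral (μ : ℝ) {v : NNReal} (hv : v ≠ 0) (x : ℝ) :
    cdf (gaussianReal μ v) x = ∫ t in Iic x, gaussianPDFReal μ v t := by
  rw [cdf_eq_real, measureReal_def, gaussianReal_apply_eq_integral μ hv,
    ENNReal.toReal_ofReal (integral_nonneg (gaussianPDFReal_nonneg μ v))]

theorem hasDerivAt_cdf_gaussianReal (μ : ℝ) {v : NNReal} (hv : v ≠ 0) (x : ℝ) :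
    HasDerivAt (cdf (gaussianReal μ v)) (gaussianPDFReal μ v x) x := by
  rw [funext (cdf_gaussianReal_eq_integral μ hv)]
  exact hasDerivAt_integral_Iic (integrable_gaussianPDFReal μ v)
    (continuous_gaussianPDFReal μ v).continuousAt

theorem gaussianPDFReal_half_add_mul_exp {α : ℝ} (hα : α ≠ 0) (c : ℝ) :
    gaussianPDFReal 0 1 (α / 2 + (1 / α) * c) * exp c =
      gaussianPDFReal 0 1 (α / 2 - (1 / α) * c) := by
  have hsq : -(α / 2 + (1 / α) * c) ^ 2 / 2 + c = -(α / 2 - (1 / α) * c) ^ 2 / 2 := by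
    field_simp
    ring
  simp only [gaussianPDFReal, sub_zero, NNReal.coe_one, mul_one, mul_assoc, ← exp_add, hsq]

noncomputable def bayesAccuracy (η α : ℝ) : ℝ :=
  η * cdf (gaussianReal 0 1) (α / 2 + (1 / α) * log (η / (1 - η))) +
    (1 - η) * cdf (gaussianReal 0 1) (α / 2 - (1 / α) * log (η / (1 - η)))

section
variable {η : ℝ} (hη₀ : 0 < η) (hη₁ : η < 1)
include hη₀ hη₁

theorem prior_mul_gaussianPDFReal_balance {α : ℝ} (hα : α ≠ 0) :
    (1 - η) * gaussianPDFReal 0 1 (α / 2 - (1 / α) * log (η / (1 - η))) =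
      η * gaussianPDFReal 0 1 (α / 2 + (1 / α) * log (η / (1 - η))) := by
  have hpos : 0 < η / (1 - η) := div_pos hη₀ (by linarith)
  rw [← gaussianPDFReal_half_add_mul_exp hα, exp_log hpos]
  field_simp [(by linarith : (1 - η) ≠ 0)]

theorem hasDerivAt_bayesAccuracy {α : ℝ} (hα : α ≠ 0) :
    HasDerivAt (bayesAccuracy η)
      (η * gaussianPDFReal 0 1 (α / 2 + (1 / α) * log (η / (1 - η)))) α := by
  set c := log (η / (1 - η))
  have hshift : HasDerivAt (fun x : ℝ ↦ (1 / x) * c) (-(α ^ 2)⁻¹ * c) α := by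
    simpa [one_div] using (hasDerivAt_inv hα).mul_const c
  have hhalf : HasDerivAt (fun x : ℝ ↦ x / 2) (1 / 2) α := by
    simpa using (hasDerivAt_id α).div_const 2
  have hΦ := hasDerivAt_cdf_gaussianReal 0 one_ne_zero
  have hsum := (((hΦ _).comp α (hhalf.add hshift)).const_mul η).add
    (((hΦ _).comp α (hhalf.sub hshift)).const_mul (1 - η))
  refine hsum.congr_deriv ?_
  linear_combination (1 / 2 + (α ^ 2)⁻¹ * c) * prior_mul_gaussianPDFReal_balance hη₀ hη₁ hα

theorem strictMonoOn_bayesAccuracy : StrictMonoOn (bayesAccuracy η) (Ioi 0) := by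
  refine strictMonoOn_of_deriv_pos (convex_Ioi 0)
    (fun α hα ↦ (hasDerivAt_bayesAccuracy hη₀ hη₁ (ne_of_gt hα)).continuousAt.continuousWithinAt)
    fun α hα ↦ ?_
  rw [interior_Ioi] at hα
  rw [(hasDerivAt_bayesAccuracy hη₀ hη₁ (ne_of_gt hα)).deriv]
  exact mul_pos hη₀ (gaussianPDFReal_pos 0 1 _ one_ne_zero)

end

theorem stmt4 (f : ℝ → ℝ → ℝ)
    (hf : ∀ α η, f α η =
      η * cdf (gaussianReal 0 1) (α / 2 + (1 / α) * Real.log (η / (1 - η))) +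
      (1 - η) * cdf (gaussianReal 0 1) (α / 2 - (1 / α) * Real.log (η / (1 - η))))
    (η : ℝ) (hη : η ∈ Set.Ioo (1 / 2 : ℝ) 1)
    (α₁ α₂ : ℝ) (h1 : α₁ > α₂) (h2 : α₂ > 0) :
    f α₁ η > f α₂ η := by
  obtain ⟨hη_half, hη_one⟩ := hη
  rw [hf, hf]
  exact strictMonoOn_bayesAccuracy (by linarith) hη_one (mem_Ioi.mpr h2)
    (mem_Ioi.mpr (h2.trans h1)) h1
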